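/- arXiv:1710.00930 — 6 statements merged into one kernel-verified Lean document; each statement's English description precedes it below -/
import Mathlib

section
/- If a 2-free Tetranacci sequence has period 3 (i.e., a_{n+3} = a_n for all n), then it is constant (has period 1). -/
lemma expEq_false (b c : ℕ) (hb : 1 ≤ b) (hc : 1 ≤ c)
    (E : 2 ^ (b + c) = 3 * 2 ^ b + 3 * 2 ^ c + 6) : False := by
  have hb2 : 2 ≤ b := by
    by_contra h
    have hb1 : b = 1 := by omega
    subst hb1
    rw [pow_add, pow_one] at E
    generalize 2 ^ c = C at E
    omega
  have hc2 : 2 ≤ c := by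
    by_contra h
    have hc1 : c = 1 := by omega
    subst hc1
    rw [pow_add, pow_one] at E
    generalize 2 ^ b = B at E
    omega
  obtain ⟨m, rfl⟩ : ∃ m, b = m + 2 := ⟨b - 2, by omega⟩
  obtain ⟨n, rfl⟩ : ∃ n, c = n + 2 := ⟨c - 2, by omega⟩
  have d1 : (4 : ℕ) ∣ 2 ^ (m + 2 + (n + 2)) := by
    have := pow_dvd_pow 2 (show 2 ≤ m + 2 + (n + 2) by omega)
    norm_num at this
    exact this
  have d2 : (4 : ℕ) ∣ 2 ^ (m + 2) := by
    have := pow_dvd_pow 2 (show 2 ≤ m + 2 by omega)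
    norm_num at this
    exact this
  have d3 : (4 : ℕ) ∣ 2 ^ (n + 2) := by
    have := pow_dvd_pow 2 (show 2 ≤ n + 2 by omega)
    norm_num at this
    exact this
  generalize 2 ^ (m + 2 + (n + 2)) = X at E d1
  generalize 2 ^ (m + 2) = Y at E d2
  generalize 2 ^ (n + 2) = Z at E d3
  omega

lemma no1 (x y z b c : ℕ) (hy : 0 < y) (hz : 0 < z)
    (h1 : 2 * x = x + y + 2 * z)
    (h2 : 2 ^ b * y = 2 * x + y + z)
    (h3 : 2 ^ c * z = x + 2 * y + z) : False := by
  have hb : 1 ≤ b := by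
    rcases Nat.eq_zero_or_pos b with rfl | h
    · rw [pow_zero, one_mul] at h2; omega
    · exact h
  have hc : 1 ≤ c := by
    rcases Nat.eq_zero_or_pos c with rfl | h
    · rw [pow_zero, one_mul] at h3; omega
    · exact h
  have h1' : (2 : ℤ) * x = x + y + 2 * z := by exact_mod_cast h1
  have h2' : (2 : ℤ) ^ b * y = 2 * x + y + z := by exact_mod_cast h2
  have h3' : (2 : ℤ) ^ c * z = x + 2 * y + z := by exact_mod_cast h3
  have E1 : (2 : ℤ) ^ (b + c) * z = (3 * 2 ^ b + 3 * 2 ^ c + 6) * z := by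
    linear_combination ((2 : ℤ) ^ b - 3) * h3' + 3 * h2' + ((2 : ℤ) ^ b + 3) * h1'
  have hz' : (z : ℤ) ≠ 0 := by exact_mod_cast hz.ne'
  have E2 : (2 : ℤ) ^ (b + c) = 3 * 2 ^ b + 3 * 2 ^ c + 6 :=
    mul_right_cancel₀ hz' E1
  exact expEq_false b c hb hc (by exact_mod_cast E2)

lemma key (x y z : ℕ) (hx : 0 < x) (hy : 0 < y) (hz : 0 < z) (a b c : ℕ)
    (h1 : 2 ^ a * x = x + y + 2 * z)
    (h2 : 2 ^ b * y = 2 * x + y + z)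
    (h3 : 2 ^ c * z = x + 2 * y + z) : x = y ∧ y = z := by
  have ha1 : 1 ≤ a := by
    rcases Nat.eq_zero_or_pos a with rfl | h
    · rw [pow_zero, one_mul] at h1; omega
    · exact h
  have hb1 : 1 ≤ b := by
    rcases Nat.eq_zero_or_pos b with rfl | h
    · rw [pow_zero, one_mul] at h2; omega
    · exact h
  have hc1 : 1 ≤ c := by
    rcases Nat.eq_zero_or_pos c with rfl | h
    · rw [pow_zero, one_mul] at h3; omega
    · exact h
  rcases eq_or_lt_of_le ha1 with haa | ha2
  · exfalso
    rw [← haa, pow_one] at h1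
    exact no1 x y z b c hy hz h1 h2 h3
  rcases eq_or_lt_of_le hb1 with hbb | hb2
  · exfalso
    rw [← hbb, pow_one] at h2
    refine no1 y z x c a hz hx (by omega) (by rw [h3]; ring) (by rw [h1]; ring)
  rcases eq_or_lt_of_le hc1 with hcc | hc2
  · exfalso
    rw [← hcc, pow_one] at h3
    refine no1 z x y a b hx hy (by omega) (by rw [h1]; ring) (by rw [h2]; ring)
  have ea : 4 * x ≤ 2 ^ a * x :=
    Nat.mul_le_mul_right x (by calc (4 : ℕ) = 2 ^ 2 := by norm_num
      _ ≤ 2 ^ a := Nat.pow_le_pow_right (by norm_num) ha2)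
  have eb : 4 * y ≤ 2 ^ b * y :=
    Nat.mul_le_mul_right y (by calc (4 : ℕ) = 2 ^ 2 := by norm_num
      _ ≤ 2 ^ b := Nat.pow_le_pow_right (by norm_num) hb2)
  have ec : 4 * z ≤ 2 ^ c * z :=
    Nat.mul_le_mul_right z (by calc (4 : ℕ) = 2 ^ 2 := by norm_num
      _ ≤ 2 ^ c := Nat.pow_le_pow_right (by norm_num) hc2)
  obtain ⟨A, hA⟩ : ∃ A, 2 ^ a * x = A := ⟨_, rfl⟩
  obtain ⟨B, hB⟩ : ∃ B, 2 ^ b * y = B := ⟨_, rfl⟩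
  obtain ⟨C, hC⟩ : ∃ C, 2 ^ c * z = C := ⟨_, rfl⟩
  rw [hA] at h1 ea
  rw [hB] at h2 eb
  rw [hC] at h3 ec
  omega

/-- A 2-free Tetranacci sequence: a sequence of odd positive integers in which
each term is the sum of the previous four terms divided by the largest power
of 2 dividing that sum (i.e., the odd part of the sum). -/
def IsTwoFreeTetranacci (a : ℕ → ℕ) : Prop :=
  (∀ n, 0 < a n) ∧ (∀ n, Odd (a n)) ∧
    ∀ n, a (n + 4) =
      (a n + a (n + 1) + a (n + 2) + a (n + 3)) /
        2 ^ padicValNat 2 (a n + a (n + 1) + a (n + 2) + a (n + 3))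

/-- If a 2-free Tetranacci sequence has period 3, then it is constant. -/
theorem period_three_implies_constant (a : ℕ → ℕ) (ha : IsTwoFreeTetranacci a)
    (hper : ∀ n, a (n + 3) = a n) : ∀ n, a (n + 1) = a n := by
  obtain ⟨hpos, hodd, hrec⟩ := ha
  have hmul : ∀ m, a (m + 4) * 2 ^ padicValNat 2 (a m + a (m + 1) + a (m + 2) + a (m + 3)) =
      a m + a (m + 1) + a (m + 2) + a (m + 3) := by
    intro m
    rw [hrec m]
    exact Nat.div_mul_cancel pow_padicValNat_dvd
  intro n
  have p3 : a (n + 3) = a n := hper n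
  have p4 : a (n + 4) = a (n + 1) := by rw [show n + 4 = n + 1 + 3 by ring, hper]
  have p5 : a (n + 5) = a (n + 2) := by rw [show n + 5 = n + 2 + 3 by ring, hper]
  have p6 : a (n + 6) = a n := by rw [show n + 6 = n + 3 + 3 by ring, hper, hper]
  obtain ⟨b, e2⟩ : ∃ b, 2 ^ b * a (n + 1) = 2 * a n + a (n + 1) + a (n + 2) := by
    refine ⟨padicValNat 2 (a n + a (n + 1) + a (n + 2) + a (n + 3)), ?_⟩
    rw [mul_comm]
    calc a (n + 1) * 2 ^ padicValNat 2 (a n + a (n + 1) + a (n + 2) + a (n + 3))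
        = a (n + 4) * 2 ^ padicValNat 2 (a n + a (n + 1) + a (n + 2) + a (n + 3)) := by rw [p4]
      _ = a n + a (n + 1) + a (n + 2) + a (n + 3) := hmul n
      _ = 2 * a n + a (n + 1) + a (n + 2) := by rw [p3]; ring
  obtain ⟨c, e3⟩ : ∃ c, 2 ^ c * a (n + 2) = a n + 2 * a (n + 1) + a (n + 2) := by
    refine ⟨padicValNat 2 (a (n + 1) + a (n + 1 + 1) + a (n + 1 + 2) + a (n + 1 + 3)), ?_⟩
    rw [mul_comm]
    calc a (n + 2) * 2 ^ padicValNat 2 (a (n + 1) + a (n + 1 + 1) + a (n + 1 + 2) + a (n + 1 + 3))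
        = a (n + 1 + 4) * 2 ^ padicValNat 2 (a (n + 1) + a (n + 1 + 1) + a (n + 1 + 2) + a (n + 1 + 3)) := by
          rw [show n + 1 + 4 = n + 5 by ring, p5]
      _ = a (n + 1) + a (n + 1 + 1) + a (n + 1 + 2) + a (n + 1 + 3) := hmul (n + 1)
      _ = a n + 2 * a (n + 1) + a (n + 2) := by
          rw [show n + 1 + 1 = n + 2 by ring, show n + 1 + 2 = n + 3 by ring,
            show n + 1 + 3 = n + 4 by ring, p3, p4]
          ring
  obtain ⟨d, e1⟩ : ∃ d, 2 ^ d * a n = a n + a (n + 1) + 2 * a (n + 2) := by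
    refine ⟨padicValNat 2 (a (n + 2) + a (n + 2 + 1) + a (n + 2 + 2) + a (n + 2 + 3)), ?_⟩
    rw [mul_comm]
    calc a n * 2 ^ padicValNat 2 (a (n + 2) + a (n + 2 + 1) + a (n + 2 + 2) + a (n + 2 + 3))
        = a (n + 2 + 4) * 2 ^ padicValNat 2 (a (n + 2) + a (n + 2 + 1) + a (n + 2 + 2) + a (n + 2 + 3)) := by
          rw [show n + 2 + 4 = n + 6 by ring, p6]
      _ = a (n + 2) + a (n + 2 + 1) + a (n + 2 + 2) + a (n + 2 + 3) := hmul (n + 2)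
      _ = a n + a (n + 1) + 2 * a (n + 2) := by
          rw [show n + 2 + 1 = n + 3 by ring, show n + 2 + 2 = n + 4 by ring,
            show n + 2 + 3 = n + 5 by ring, p3, p4, p5]
          ring
  exact ((key (a n) (a (n + 1)) (a (n + 2)) (hpos n) (hpos (n + 1)) (hpos (n + 2))
    d b c e1 e2 e3).1).symm
end

section
/- If a 2-free Tetranacci sequence has period 4 (i.e., a_{n+4} = a_n for all n), then it is constant (has period 1). -/
/-- If a 2-free Tetranacci sequence has period 4, then it is constant. -/
theorem period_four_implies_constant (a : ℕ → ℕ) (ha : IsTwoFreeTetranacci a)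
    (hper : ∀ n, a (n + 4) = a n) : ∀ n, a (n + 1) = a n := by
  obtain ⟨hpos, hodd, hrec⟩ := ha
  intro n
  have e : a (n+1) + a (n+1+1) + a (n+1+2) + a (n+1+3) =
      a n + a (n+1) + a (n+2) + a (n+3) := by
    have h4 : a (n+1+3) = a n := by
      rw [show n+1+3 = n+4 from rfl, hper]
    rw [show n+1+1 = n+2 from rfl, show n+1+2 = n+3 from rfl, h4]; ring
  have h2 := hrec (n+1)
  rw [e, ← hrec n] at h2
  have h5 := hper (n+1)
  have h0 := hper n
  omega
end

section
/- If a 2-free Tetranacci sequence has period p with 0 < p < 5 (i.e., a_{n+p} = a_n for all n), then it has period 1, i.e., it is constant. -/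
/-!
A period dividing 4 makes two consecutive four-term sums equal, hence two consecutive terms equal,
hence the sequence is constant. For period 3 with terms `x, y, z`, each term times a power of two
is `T` plus its predecessor, where `T = x + y + z`. If `x` is the largest, then
`x * 2 ^ k = x + y + 2 z ≤ 4 x` leaves `2 ^ k ∈ {2, 4}`. The value `4` forces `x = y = z`. The
value `2` gives `x = y + 2 z`; then `2 x + y + z` and `x + 2 y + z` both exceed twice their odd
part, so they are divisible by 4, and so is their difference `2 z`, contradicting `z` odd.
-/

open Function

lemma eq_two_mul_or_four_mul_of_mul_two_pow_eq {x s k : ℕ} (h : x * 2 ^ k = s) (hlt : x < s)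
    (hle : s ≤ 4 * x) : s = 2 * x ∨ s = 4 * x := by
  have hk : k ≤ 2 := by
    by_contra! hk
    have : x * 2 ^ 3 ≤ x * 2 ^ k := Nat.mul_le_mul_left x (Nat.pow_le_pow_right two_pos hk)
    omega
  interval_cases k <;> omega

lemma four_dvd_of_mul_two_pow_eq {y s k : ℕ} (h : y * 2 ^ k = s) (hlt : 2 * y < s) : 4 ∣ s := by
  have hk : 2 ≤ k := by
    by_contra! hk
    have : y * 2 ^ k ≤ y * 2 ^ 1 :=
      Nat.mul_le_mul_left y (Nat.pow_le_pow_right two_pos (by omega))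
    omega
  exact h ▸ Dvd.dvd.mul_left (pow_dvd_pow 2 hk) y

lemma eq_of_cyclic_of_le {x y z : ℕ} (hz : Odd z) (h₀ : ∃ k, y * 2 ^ k = 2 * x + y + z)
    (h₁ : ∃ k, z * 2 ^ k = 2 * y + z + x) (h₂ : ∃ k, x * 2 ^ k = 2 * z + x + y)
    (hyx : y ≤ x) (hzx : z ≤ x) : x = y ∧ x = z := by
  obtain ⟨k₀, h₀⟩ := h₀
  obtain ⟨k₁, h₁⟩ := h₁
  obtain ⟨k₂, h₂⟩ := h₂
  obtain ⟨m, rfl⟩ := hz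
  rcases eq_two_mul_or_four_mul_of_mul_two_pow_eq h₂ (by omega) (by omega) with h | h
  · have := four_dvd_of_mul_two_pow_eq h₀ (by omega)
    have := four_dvd_of_mul_two_pow_eq h₁ (by omega)
    omega
  · omega

lemma eq_of_cyclic {x y z : ℕ} (hx : Odd x) (hy : Odd y) (hz : Odd z)
    (h₀ : ∃ k, y * 2 ^ k = 2 * x + y + z) (h₁ : ∃ k, z * 2 ^ k = 2 * y + z + x)
    (h₂ : ∃ k, x * 2 ^ k = 2 * z + x + y) : x = y ∧ y = z := by
  by_cases hX : y ≤ x ∧ z ≤ x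
  · have := eq_of_cyclic_of_le hz h₀ h₁ h₂ hX.1 hX.2
    omega
  by_cases hY : z ≤ y ∧ x ≤ y
  · have := eq_of_cyclic_of_le hx h₁ h₂ h₀ hY.1 hY.2
    omega
  · have := eq_of_cyclic_of_le hy h₂ h₀ h₁ (by omega) (by omega)
    omega

lemma apply_succ_eq_of_periodic_four {M : Type*} [AddCommMonoid M] {a : ℕ → M} (g : M → M)
    (hrec : ∀ n, a (n + 4) = g (a n + a (n + 1) + a (n + 2) + a (n + 3))) (hP : Periodic a 4)
    (n : ℕ) : a (n + 1) = a n := by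
  have hsum : a (n + 1) + a (n + 2) + a (n + 3) + a (n + 4) =
      a n + a (n + 1) + a (n + 2) + a (n + 3) := by
    rw [hP n]
    abel
  calc a (n + 1) = a (n + 5) := (hP (n + 1)).symm
    _ = g (a (n + 1) + a (n + 2) + a (n + 3) + a (n + 4)) := hrec (n + 1)
    _ = a (n + 4) := by rw [hsum, hrec n]
    _ = a n := hP n

namespace IsTwoFreeTetranacci

variable {a : ℕ → ℕ}

lemma exists_mul_two_pow_eq (ha : IsTwoFreeTetranacci a) (n : ℕ) :
    ∃ k, a (n + 4) * 2 ^ k = a n + a (n + 1) + a (n + 2) + a (n + 3) :=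
  ⟨_, by rw [ha.2.2 n]; exact Nat.div_mul_cancel pow_padicValNat_dvd⟩

lemma apply_succ_eq_of_periodic_three (ha : IsTwoFreeTetranacci a) (hP : Periodic a 3) (n : ℕ) :
    a (n + 1) = a n := by
  have hcyc : ∀ n, ∃ k, a (n + 1) * 2 ^ k = 2 * a n + a (n + 1) + a (n + 2) := fun n => by
    obtain ⟨k, hk⟩ := ha.exists_mul_two_pow_eq n
    have h₄ : a (n + 4) = a (n + 1) := hP (n + 1)
    have h₃ : a (n + 3) = a n := hP n
    rw [h₄, h₃] at hk
    exact ⟨k, by rw [hk]; ring⟩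
  have h₃ : a 3 = a 0 := hP 0
  have h₄ : a 4 = a 1 := hP 1
  obtain ⟨h₀₁, h₁₂⟩ := eq_of_cyclic (ha.2.1 0) (ha.2.1 1) (ha.2.1 2) (hcyc 0)
    (by simpa only [Nat.reduceAdd, h₃] using hcyc 1)
    (by simpa only [Nat.reduceAdd, h₃, h₄] using hcyc 2)
  have hconst : ∀ m, a m = a 0 := fun m => by
    rw [← hP.map_mod_nat m]
    have : m % 3 < 3 := Nat.mod_lt m three_pos
    interval_cases m % 3 <;> omega
  rw [hconst n, hconst (n + 1)]

end IsTwoFreeTetranacci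

/-- If a 2-free Tetranacci sequence has period `p` with `0 < p < 5`,
then it has period 1, i.e., it is constant. -/
theorem period_lt_five_implies_constant (a : ℕ → ℕ) (ha : IsTwoFreeTetranacci a)
    (p : ℕ) (hp : 0 < p) (hp5 : p < 5) (hper : ∀ n, a (n + p) = a n) :
    ∀ n, a (n + 1) = a n := by
  have of_periodic_four : Periodic a 4 → ∀ n, a (n + 1) = a n :=
    apply_succ_eq_of_periodic_four (fun s ↦ s / 2 ^ padicValNat 2 s) ha.2.2
  interval_cases p
  · exact hper
  · exact of_periodic_four (Periodic.nat_mul hper 2)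
  · exact ha.apply_succ_eq_of_periodic_three hper
  · exact of_periodic_four hper
end

section
/- For every odd positive integer a, the 5-periodic sequence whose repeating block is (3a, 3a, a, a, a) is a 2-free Tetranacci sequence, and it has period exactly 5 (in particular it is not constant). -/
lemma pv_aux (k m : ℕ) (hm : Odd m) (hm0 : 0 < m) :
    padicValNat 2 (2 ^ k * m) = k := by
  rw [padicValNat.mul (pow_ne_zero _ two_ne_zero) hm0.ne',
    padicValNat.prime_pow, padicValNat.eq_zero_of_not_dvd]
  · omega
  · rw [Nat.two_dvd_ne_zero]
    exact Nat.odd_iff.mp hm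

lemma div_aux (k m : ℕ) (hm : Odd m) (hm0 : 0 < m) :
    2 ^ k * m / 2 ^ padicValNat 2 (2 ^ k * m) = m := by
  rw [pv_aux k m hm hm0, Nat.mul_div_cancel_left _ (by positivity)]

/-- For every odd positive integer `a`, the 5-periodic sequence with repeating
block `(3a, 3a, a, a, a)` is a 2-free Tetranacci sequence with period exactly 5
(in particular, it is not constant). -/
theorem block_3a_3a_a_a_a_is_tetranacci_period_five (a : ℕ) (ha : 0 < a) (hodd : Odd a) :
    IsTwoFreeTetranacci (fun n => if n % 5 = 0 ∨ n % 5 = 1 then 3 * a else a) ∧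
    (∀ n, (fun n => if n % 5 = 0 ∨ n % 5 = 1 then 3 * a else a) (n + 5) =
      (fun n => if n % 5 = 0 ∨ n % 5 = 1 then 3 * a else a) n) ∧
    (∀ p : ℕ, 0 < p → p < 5 →
      ¬ (∀ n, (fun n => if n % 5 = 0 ∨ n % 5 = 1 then 3 * a else a) (n + p) =
        (fun n => if n % 5 = 0 ∨ n % 5 = 1 then 3 * a else a) n)) := by
  have h3a : Odd (3 * a) := (by decide : Odd 3).mul hodd
  have h3a0 : 0 < 3 * a := by omega
  refine ⟨⟨fun n => ?_, fun n => ?_, fun n => ?_⟩, fun n => ?_, ?_⟩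
  · simp only; split <;> omega
  · simp only; split
    · exact h3a
    · exact hodd
  · simp only
    have h : n % 5 = 0 ∨ n % 5 = 1 ∨ n % 5 = 2 ∨ n % 5 = 3 ∨ n % 5 = 4 := by omega
    rcases h with h | h | h | h | h
    · rw [if_neg (by omega), if_pos (by omega), if_pos (by omega), if_neg (by omega),
        if_neg (by omega)]
      have e : 3 * a + 3 * a + a + a = 2 ^ 3 * a := by ring
      rw [e, div_aux 3 a hodd ha]
    · rw [if_pos (by omega), if_pos (by omega), if_neg (by omega), if_neg (by omega),
        if_neg (by omega)]
      have e : 3 * a + a + a + a = 2 ^ 1 * (3 * a) := by ring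
      rw [e, div_aux 1 (3 * a) h3a h3a0]
    · rw [if_pos (by omega), if_neg (by omega), if_neg (by omega), if_neg (by omega),
        if_pos (by omega)]
      have e : a + a + a + 3 * a = 2 ^ 1 * (3 * a) := by ring
      rw [e, div_aux 1 (3 * a) h3a h3a0]
    · rw [if_neg (by omega), if_neg (by omega), if_neg (by omega), if_pos (by omega),
        if_pos (by omega)]
      have e : a + a + 3 * a + 3 * a = 2 ^ 3 * a := by ring
      rw [e, div_aux 3 a hodd ha]
    · rw [if_neg (by omega), if_neg (by omega), if_pos (by omega), if_pos (by omega),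
        if_neg (by omega)]
      have e : a + 3 * a + 3 * a + a = 2 ^ 3 * a := by ring
      rw [e, div_aux 3 a hodd ha]
  · simp only [Nat.add_mod_right]
  · intro p hp hp5 hper
    interval_cases p
    · have := hper 1
      norm_num at this
      omega
    · have := hper 0
      norm_num at this
      omega
    · have := hper 3
      norm_num at this
      omega
    · have := hper 0
      norm_num at this
      omega
end

section
/- For every N > 0 there exists a 2-free Tetranacci sequence (a_n) such that for all i ≤ N, d_i = 1; that is, for all i ≤ N the 2-adic valuation of a_i + a_{i+1} + a_{i+2} + a_{i+3} is exactly 1, so each of the first N recursion steps divides the sum by 2 exactly once. -/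
lemma padic_two_mul_odd (x : ℕ) : padicValNat 2 (2 * (2 * x + 1)) = 1 := by
  rw [padicValNat.mul (p := 2) two_ne_zero (by omega)]
  rw [padicValNat.self one_lt_two, padicValNat.eq_zero_of_not_dvd (by omega)]


namespace TwoFreeAux

abbrev W4 := ℕ × ℕ × ℕ × ℕ

/-- step for the auxiliary integer sequence `B n = 2^n * a n`. -/
def Bstep (w : W4) : W4 :=
  (w.2.1, w.2.2.1, w.2.2.2, 8 * w.1 + 4 * w.2.1 + 2 * w.2.2.1 + w.2.2.2)

def BW (q : W4) : ℕ → W4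
  | 0 => q
  | n + 1 => Bstep (BW q n)

def Bseq (q : W4) (n : ℕ) : ℕ := (BW q n).1

lemma BW_succ (q : W4) (n : ℕ) : BW q (n + 1) = Bstep (BW q n) := rfl

lemma Bseq_rec (q : W4) (n : ℕ) :
    Bseq q (n + 4) = 8 * Bseq q n + 4 * Bseq q (n + 1) + 2 * Bseq q (n + 2) + Bseq q (n + 3) := by
  have h1 : ∀ m, (BW q (m + 1)).1 = (BW q m).2.1 := fun m => rfl
  have h2 : ∀ m, (BW q (m + 1)).2.1 = (BW q m).2.2.1 := fun m => rfl
  have h3 : ∀ m, (BW q (m + 1)).2.2.1 = (BW q m).2.2.2 := fun m => rfl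
  have e1 : (BW q n).2.1 = Bseq q (n + 1) := (h1 n).symm
  have e2 : (BW q n).2.2.1 = Bseq q (n + 2) := by
    show _ = (BW q (n + 2)).1; rw [h1 (n + 1), h2 n]
  have e3 : (BW q n).2.2.2 = Bseq q (n + 3) := by
    show _ = (BW q (n + 3)).1; rw [h1 (n + 2), h2 (n + 1), h3 n]
  show (BW q (n + 4)).1 = _
  rw [h1 (n + 3), h2 (n + 2), h3 (n + 1)]
  show 8 * (BW q n).1 + 4 * (BW q n).2.1 + 2 * (BW q n).2.2.1 + (BW q n).2.2.2 = _
  rw [e1, e2, e3]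
  rfl

def padd (w v : W4) : W4 := (w.1 + v.1, w.2.1 + v.2.1, w.2.2.1 + v.2.2.1, w.2.2.2 + v.2.2.2)
def psmul (d : ℕ) (w : W4) : W4 := (d * w.1, d * w.2.1, d * w.2.2.1, d * w.2.2.2)

lemma BW_padd (q r : W4) (n : ℕ) : BW (padd q r) n = padd (BW q n) (BW r n) := by
  induction n with
  | zero => rfl
  | succ n ih =>
      rw [BW_succ, BW_succ, BW_succ, ih]
      simp only [Bstep, padd]
      refine Prod.ext rfl (Prod.ext rfl (Prod.ext rfl ?_))
      simp only
      ring

lemma BW_psmul (d : ℕ) (q : W4) (n : ℕ) : BW (psmul d q) n = psmul d (BW q n) := by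
  induction n with
  | zero => rfl
  | succ n ih =>
      rw [BW_succ, BW_succ, ih]
      simp only [Bstep, psmul]
      refine Prod.ext rfl (Prod.ext rfl (Prod.ext rfl ?_))
      simp only
      ring

/-- the influence sequence of the first coordinate -/
def S (n : ℕ) : ℕ := Bseq (1, 0, 0, 0) n

lemma Bseq_perturb (q : W4) (d n : ℕ) :
    Bseq (padd q (psmul d (1, 0, 0, 0))) n = Bseq q n + d * S n := by
  unfold Bseq S
  rw [BW_padd, BW_psmul]
  rfl

lemma S_mod16 (n : ℕ) : S (n + 4) % 16 = 8 := by
  have key : ∀ m, S (m + 4) % 16 = 8 ∧ S (m + 5) % 16 = 8 ∧ S (m + 6) % 16 = 8 ∧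
      S (m + 7) % 16 = 8 := by
    intro m
    induction m with
    | zero => refine ⟨?_, ?_, ?_, ?_⟩ <;> rfl
    | succ m ih =>
        obtain ⟨h1, h2, h3, h4⟩ := ih
        refine ⟨h2, h3, h4, ?_⟩
        have h8 : S (m + 8) = 8 * S (m + 4) + 4 * S (m + 5) + 2 * S (m + 6) + S (m + 7) :=
          Bseq_rec (1, 0, 0, 0) (m + 4)
        show S (m + 8) % 16 = 8
        omega
  exact (key n).1

lemma S_exists (n : ℕ) : ∃ t, S (n + 4) = 16 * t + 8 := by
  have := S_mod16 n
  exact ⟨S (n + 4) / 16, by omega⟩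

def good (q : W4) (n : ℕ) : Prop := ∃ u, Bseq q n = 2 ^ n * (2 * u + 1)

/-- main existence: initial quadruples realizing exact valuation arbitrarily far -/
lemma main (M : ℕ) : ∃ q : W4, ∀ n ≤ M + 3, good q n := by
  induction M with
  | zero =>
      refine ⟨(1, 2, 4, 8), fun n hn => ?_⟩
      interval_cases n
      · exact ⟨0, rfl⟩
      · exact ⟨0, rfl⟩
      · exact ⟨0, rfl⟩
      · exact ⟨0, rfl⟩
  | succ M ih =>
      obtain ⟨q, hq⟩ := ih
      obtain ⟨u0, h0⟩ := hq M (by omega)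
      obtain ⟨u1, h1⟩ := hq (M + 1) (by omega)
      obtain ⟨u2, h2⟩ := hq (M + 2) (by omega)
      obtain ⟨u3, h3⟩ := hq (M + 3) (by omega)
      have hrec := Bseq_rec q M
      have hB4 : Bseq q (M + 4) = 2 ^ (M + 4) * (u0 + u1 + u2 + u3 + 2) := by
        rw [hrec, h0, h1, h2, h3]; ring
      rcases Nat.even_or_odd (u0 + u1 + u2 + u3 + 2) with he | ho
      · -- perturb
        obtain ⟨v, hv⟩ := he
        refine ⟨padd q (psmul (2 ^ (M + 1)) (1, 0, 0, 0)), fun n hn => ?_⟩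
        have hB : ∀ m, Bseq (padd q (psmul (2 ^ (M + 1)) (1, 0, 0, 0))) m
            = Bseq q m + 2 ^ (M + 1) * S m := fun m => Bseq_perturb q _ m
        rcases Nat.lt_or_ge n 4 with h4 | h4
        · interval_cases n
          · obtain ⟨w, hw⟩ := hq 0 (by omega)
            refine ⟨w + 2 ^ M, ?_⟩
            rw [hB 0, hw]
            show 2 ^ 0 * (2 * w + 1) + 2 ^ (M + 1) * 1 = _
            ring
          · obtain ⟨w, hw⟩ := hq 1 (by omega)
            exact ⟨w, by rw [hB 1, hw]; show _ + 2 ^ (M+1) * 0 = _; ring⟩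
          · obtain ⟨w, hw⟩ := hq 2 (by omega)
            exact ⟨w, by rw [hB 2, hw]; show _ + 2 ^ (M+1) * 0 = _; ring⟩
          · obtain ⟨w, hw⟩ := hq 3 (by omega)
            exact ⟨w, by rw [hB 3, hw]; show _ + 2 ^ (M+1) * 0 = _; ring⟩
        · obtain ⟨j, rfl⟩ : ∃ j, n = j + 4 := ⟨n - 4, by omega⟩
          obtain ⟨t, ht⟩ := S_exists j
          rcases Nat.lt_or_ge (j + 4) (M + 4) with hlt | hge
          · -- 4 ≤ n ≤ M+3 : old value perturbed by multiple of 2^{n+1}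
            obtain ⟨w, hw⟩ := hq (j + 4) (by omega)
            obtain ⟨c, hc⟩ : ∃ c, M + 4 = (j + 4) + (c + 1) := ⟨M - j - 1, by omega⟩
            refine ⟨w + 2 ^ c * (2 * t + 1), ?_⟩
            rw [hB, hw, ht]
            have : 2 ^ (M + 1) * (16 * t + 8) = 2 ^ (M + 4) * (2 * t + 1) := by ring
            rw [this, hc, pow_add]
            ring
          · -- n = M + 4
            have hn4 : j = M := by omega
            subst hn4
            refine ⟨v + t, ?_⟩
            rw [hB, hB4, hv, ht]
            have : 2 ^ (j + 1) * (16 * t + 8) = 2 ^ (j + 4) * (2 * t + 1) := by ring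
            rw [this]
            ring
      · -- no perturbation needed
        refine ⟨q, fun n hn => ?_⟩
        rcases Nat.lt_or_ge n (M + 4) with hlt | hge
        · exact hq n (by omega)
        · have hn4 : n = M + 4 := by omega
          obtain ⟨v, hv⟩ := ho
          exact ⟨v, by rw [hn4, hB4, hv]⟩

lemma oddPart_spec (s : ℕ) (hs : 0 < s) :
    0 < s / 2 ^ padicValNat 2 s ∧ (s / 2 ^ padicValNat 2 s) % 2 = 1 := by
  have h := Nat.factorization_def s Nat.prime_two
  have h1 := Nat.ordCompl_pos 2 hs.ne'
  have h2 := Nat.not_dvd_ordCompl Nat.prime_two hs.ne'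
  rw [h] at h1 h2
  exact ⟨h1, by omega⟩

def Astep (w : W4) : W4 :=
  (w.2.1, w.2.2.1, w.2.2.2,
    (w.1 + w.2.1 + w.2.2.1 + w.2.2.2) / 2 ^ padicValNat 2 (w.1 + w.2.1 + w.2.2.1 + w.2.2.2))

def AW (q : W4) : ℕ → W4
  | 0 => q
  | n + 1 => Astep (AW q n)

def Aseq (q : W4) (n : ℕ) : ℕ := (AW q n).1

lemma Aseq_rec (q : W4) (n : ℕ) :
    Aseq q (n + 4) = (Aseq q n + Aseq q (n + 1) + Aseq q (n + 2) + Aseq q (n + 3)) /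
      2 ^ padicValNat 2 (Aseq q n + Aseq q (n + 1) + Aseq q (n + 2) + Aseq q (n + 3)) := by
  have h1 : ∀ m, (AW q (m + 1)).1 = (AW q m).2.1 := fun m => rfl
  have h2 : ∀ m, (AW q (m + 1)).2.1 = (AW q m).2.2.1 := fun m => rfl
  have h3 : ∀ m, (AW q (m + 1)).2.2.1 = (AW q m).2.2.2 := fun m => rfl
  have e1 : (AW q n).2.1 = Aseq q (n + 1) := (h1 n).symm
  have e2 : (AW q n).2.2.1 = Aseq q (n + 2) := by
    show _ = (AW q (n + 2)).1; rw [h1 (n + 1), h2 n]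
  have e3 : (AW q n).2.2.2 = Aseq q (n + 3) := by
    show _ = (AW q (n + 3)).1; rw [h1 (n + 2), h2 (n + 1), h3 n]
  show (AW q (n + 4)).1 = _
  rw [h1 (n + 3), h2 (n + 2), h3 (n + 1)]
  show ((AW q n).1 + (AW q n).2.1 + (AW q n).2.2.1 + (AW q n).2.2.2) /
      2 ^ padicValNat 2 ((AW q n).1 + (AW q n).2.1 + (AW q n).2.2.1 + (AW q n).2.2.2) = _
  rw [e1, e2, e3]
  rfl

lemma Aseq_oddpos (q : W4)
    (h : (0 < q.1 ∧ q.1 % 2 = 1) ∧ (0 < q.2.1 ∧ q.2.1 % 2 = 1) ∧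
      (0 < q.2.2.1 ∧ q.2.2.1 % 2 = 1) ∧ (0 < q.2.2.2 ∧ q.2.2.2 % 2 = 1)) (n : ℕ) :
    0 < Aseq q n ∧ Aseq q n % 2 = 1 := by
  have key : ∀ m, (0 < (AW q m).1 ∧ (AW q m).1 % 2 = 1) ∧
      (0 < (AW q m).2.1 ∧ (AW q m).2.1 % 2 = 1) ∧
      (0 < (AW q m).2.2.1 ∧ (AW q m).2.2.1 % 2 = 1) ∧
      (0 < (AW q m).2.2.2 ∧ (AW q m).2.2.2 % 2 = 1) := by
    intro m
    induction m with
    | zero => exact h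
    | succ m ih =>
        obtain ⟨i1, i2, i3, i4⟩ := ih
        refine ⟨i2, i3, i4, ?_⟩
        have hs : 0 < (AW q m).1 + (AW q m).2.1 + (AW q m).2.2.1 + (AW q m).2.2.2 := by omega
        exact oddPart_spec _ hs
  exact (key n).1

end TwoFreeAux

open TwoFreeAux

/-- For any `N > 0` there is a 2-free Tetranacci sequence that is
initially division-poor: over the first `N` recursion steps, the sum of four
consecutive terms is divisible by 2 exactly once. -/
theorem exists_initially_division_poor (N : ℕ) (hN : 0 < N) :
    ∃ a : ℕ → ℕ, IsTwoFreeTetranacci a ∧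
      ∀ i ≤ N, padicValNat 2 (a i + a (i + 1) + a (i + 2) + a (i + 3)) = 1 := by
  obtain ⟨q, hq⟩ := TwoFreeAux.main (N + 1)
  obtain ⟨u0, h0⟩ := hq 0 (by omega)
  obtain ⟨u1, h1⟩ := hq 1 (by omega)
  obtain ⟨u2, h2⟩ := hq 2 (by omega)
  obtain ⟨u3, h3⟩ := hq 3 (by omega)
  refine ⟨Aseq (2 * u0 + 1, 2 * u1 + 1, 2 * u2 + 1, 2 * u3 + 1), ?_, ?_⟩
  case refine_1 =>
    have hop := Aseq_oddpos (2 * u0 + 1, 2 * u1 + 1, 2 * u2 + 1, 2 * u3 + 1)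
      ⟨⟨show 0 < 2 * u0 + 1 by omega, show (2 * u0 + 1) % 2 = 1 by omega⟩,
        ⟨show 0 < 2 * u1 + 1 by omega, show (2 * u1 + 1) % 2 = 1 by omega⟩,
        ⟨show 0 < 2 * u2 + 1 by omega, show (2 * u2 + 1) % 2 = 1 by omega⟩,
        ⟨show 0 < 2 * u3 + 1 by omega, show (2 * u3 + 1) % 2 = 1 by omega⟩⟩
    exact ⟨fun n => (hop n).1, fun n => Nat.odd_iff.mpr (hop n).2,
      fun n => Aseq_rec _ n⟩
  case refine_2 =>
    have key : ∀ n, n ≤ N + 4 →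
        ∃ u, Aseq (2 * u0 + 1, 2 * u1 + 1, 2 * u2 + 1, 2 * u3 + 1) n = 2 * u + 1 ∧
          Bseq q n = 2 ^ n * (2 * u + 1) := by
      intro n
      induction n using Nat.strong_induction_on with
      | _ n ih =>
        intro hn
        rcases Nat.lt_or_ge n 4 with h4 | h4
        · interval_cases n
          · exact ⟨u0, rfl, h0⟩
          · exact ⟨u1, rfl, h1⟩
          · exact ⟨u2, rfl, h2⟩
          · exact ⟨u3, rfl, h3⟩
        · obtain ⟨m, rfl⟩ : ∃ m, n = m + 4 := ⟨n - 4, by omega⟩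
          obtain ⟨a0, ha0, hb0⟩ := ih m (by omega) (by omega)
          obtain ⟨a1, ha1, hb1⟩ := ih (m + 1) (by omega) (by omega)
          obtain ⟨a2, ha2, hb2⟩ := ih (m + 2) (by omega) (by omega)
          obtain ⟨a3, ha3, hb3⟩ := ih (m + 3) (by omega) (by omega)
          have hBm4 : Bseq q (m + 4) = 2 ^ (m + 4) * (a0 + a1 + a2 + a3 + 2) := by
            rw [Bseq_rec q m, hb0, hb1, hb2, hb3]; ring
          obtain ⟨w, hw⟩ := hq (m + 4) hn
          have hodd : a0 + a1 + a2 + a3 + 2 = 2 * w + 1 :=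
            Nat.eq_of_mul_eq_mul_left (pow_pos (by norm_num) (m + 4)) (hBm4.symm.trans hw)
          have hsum : Aseq (2 * u0 + 1, 2 * u1 + 1, 2 * u2 + 1, 2 * u3 + 1) m +
              Aseq (2 * u0 + 1, 2 * u1 + 1, 2 * u2 + 1, 2 * u3 + 1) (m + 1) +
              Aseq (2 * u0 + 1, 2 * u1 + 1, 2 * u2 + 1, 2 * u3 + 1) (m + 2) +
              Aseq (2 * u0 + 1, 2 * u1 + 1, 2 * u2 + 1, 2 * u3 + 1) (m + 3) =
              2 * (2 * w + 1) := by
            rw [ha0, ha1, ha2, ha3]; omega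
          refine ⟨w, ?_, hw⟩
          rw [Aseq_rec _ m, hsum, padic_two_mul_odd, pow_one]
          omega
    intro i hi
    obtain ⟨a0, ha0, hb0⟩ := key i (by omega)
    obtain ⟨a1, ha1, hb1⟩ := key (i + 1) (by omega)
    obtain ⟨a2, ha2, hb2⟩ := key (i + 2) (by omega)
    obtain ⟨a3, ha3, hb3⟩ := key (i + 3) (by omega)
    have hBm4 : Bseq q (i + 4) = 2 ^ (i + 4) * (a0 + a1 + a2 + a3 + 2) := by
      rw [Bseq_rec q i, hb0, hb1, hb2, hb3]; ring
    obtain ⟨w, hw⟩ := hq (i + 4) (by omega)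
    have hodd : a0 + a1 + a2 + a3 + 2 = 2 * w + 1 :=
      Nat.eq_of_mul_eq_mul_left (pow_pos (by norm_num) (i + 4)) (hBm4.symm.trans hw)
    have hsum : Aseq (2 * u0 + 1, 2 * u1 + 1, 2 * u2 + 1, 2 * u3 + 1) i +
        Aseq (2 * u0 + 1, 2 * u1 + 1, 2 * u2 + 1, 2 * u3 + 1) (i + 1) +
        Aseq (2 * u0 + 1, 2 * u1 + 1, 2 * u2 + 1, 2 * u3 + 1) (i + 2) +
        Aseq (2 * u0 + 1, 2 * u1 + 1, 2 * u2 + 1, 2 * u3 + 1) (i + 3) = 2 * (2 * w + 1) := by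
      rw [ha0, ha1, ha2, ha3]; omega
    rw [hsum]
    exact padic_two_mul_odd w
end

section
/- Let a, b, c be odd positive integers and suppose there exist positive integers i, j, k such that 2a + b + c = b·2^i, a + 2b + c = c·2^j, and a + b + 2c = a·2^k. Then a = b = c (and i = j = k = 2). -/
lemma aux_period3 (a b c : ℕ) (ha : 0 < a) (hb : 0 < b) (hc : 0 < c)
    (i j k : ℕ) (hi : 0 < i) (hj : 0 < j) (hk : 0 < k)
    (hba : b ≤ a) (hca : c ≤ a)
    (h1 : 2 * a + b + c = b * 2 ^ i)
    (h2 : a + 2 * b + c = c * 2 ^ j)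
    (h3 : a + b + 2 * c = a * 2 ^ k) :
    a = b ∧ a = c ∧ i = 2 ∧ j = 2 ∧ k = 2 := by
  -- k ≤ 2
  have hk2 : k ≤ 2 := by
    by_contra h
    have h8 : (8 : ℕ) ≤ 2 ^ k := by
      calc (8:ℕ) = 2 ^ 3 := by norm_num
      _ ≤ 2 ^ k := Nat.pow_le_pow_right (by norm_num) (by omega)
    have : a * 8 ≤ a * 2 ^ k := Nat.mul_le_mul_left a h8
    omega
  interval_cases k
  · -- k = 1 : a = b + 2c, derive contradiction
    have hk1 : (2:ℕ)^1 = 2 := by norm_num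
    rw [hk1] at h3
    have hacc : a = b + 2 * c := by omega
    have e1 : b * 2 ^ i = 3 * b + 5 * c := by omega
    have e2 : c * 2 ^ j = 3 * b + 3 * c := by omega
    have hi2 : 2 ≤ i := by
      rcases Nat.lt_or_ge i 2 with h' | h'
      · interval_cases i <;> norm_num at e1 <;> omega
      · exact h'
    have hj2 : 2 ≤ j := by
      rcases Nat.lt_or_ge j 2 with h' | h'
      · interval_cases j <;> norm_num at e2 <;> omega
      · exact h'
    have h4i : (4:ℕ) ≤ 2 ^ i := by
      calc (4:ℕ) = 2 ^ 2 := by norm_num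
      _ ≤ 2 ^ i := Nat.pow_le_pow_right (by norm_num) hi2
    have h4j : (4:ℕ) ≤ 2 ^ j := by
      calc (4:ℕ) = 2 ^ 2 := by norm_num
      _ ≤ 2 ^ j := Nat.pow_le_pow_right (by norm_num) hj2
    have key : 2 ^ i * 2 ^ j * (b * c) = (3 * 2 ^ i + 3 * 2 ^ j + 6) * (b * c) := by
      have l : 2 ^ i * 2 ^ j * (b * c) = (b * 2 ^ i) * (c * 2 ^ j) := by ring
      have r : (3 * 2 ^ i + 3 * 2 ^ j + 6) * (b * c)
          = 3 * c * (b * 2 ^ i) + 3 * b * (c * 2 ^ j) + 6 * (b * c) := by ring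
      rw [l, r, e1, e2]; ring
    have hX : 2 ^ i * 2 ^ j = 3 * 2 ^ i + 3 * 2 ^ j + 6 :=
      Nat.eq_of_mul_eq_mul_right (by positivity) key
    have h15 : (2 ^ i - 3) * (2 ^ j - 3) = 15 := by
      zify [show (3:ℕ) ≤ 2 ^ i by omega, show (3:ℕ) ≤ 2 ^ j by omega]
      have hXz : (2:ℤ) ^ i * 2 ^ j = 3 * 2 ^ i + 3 * 2 ^ j + 6 := by exact_mod_cast hX
      linear_combination hXz
    have hdvd : (2 ^ i - 3) ∣ 15 := ⟨_, h15.symm⟩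
    have hle : 2 ^ i - 3 ≤ 15 := Nat.le_of_dvd (by norm_num) hdvd
    have hdvd' : (2 ^ j - 3) ∣ 15 := ⟨_, by rw [mul_comm] at h15; exact h15.symm⟩
    have hle' : 2 ^ j - 3 ≤ 15 := Nat.le_of_dvd (by norm_num) hdvd'
    have hile : i ≤ 4 := by
      by_contra h'
      have : (32:ℕ) ≤ 2 ^ i := by
        calc (32:ℕ) = 2 ^ 5 := by norm_num
        _ ≤ 2 ^ i := Nat.pow_le_pow_right (by norm_num) (by omega)
      omega
    have hjle : j ≤ 4 := by
      by_contra h'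
      have : (32:ℕ) ≤ 2 ^ j := by
        calc (32:ℕ) = 2 ^ 5 := by norm_num
        _ ≤ 2 ^ j := Nat.pow_le_pow_right (by norm_num) (by omega)
      omega
    interval_cases i <;> interval_cases j <;> norm_num at h15
  · -- k = 2 : forces a = b = c
    have hk4 : (2:ℕ)^2 = 4 := by norm_num
    rw [hk4] at h3
    have hab : a = b := by omega
    have hac : a = c := by omega
    subst hab; subst hac
    have e1 : a * 2 ^ i = a * 4 := by omega
    have e2 : a * 2 ^ j = a * 4 := by omega
    have hi' : (2:ℕ) ^ i = 2 ^ 2 := by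
      have := Nat.eq_of_mul_eq_mul_left ha e1; omega
    have hj' : (2:ℕ) ^ j = 2 ^ 2 := by
      have := Nat.eq_of_mul_eq_mul_left ha e2; omega
    exact ⟨rfl, rfl, Nat.pow_right_injective (by norm_num) hi',
      Nat.pow_right_injective (by norm_num) hj', rfl⟩


/-- If `a, b, c` are odd positive integers and there exist positive integers
`i, j, k` with `2a + b + c = b·2^i`, `a + 2b + c = c·2^j`, and
`a + b + 2c = a·2^k`, then `a = b = c` (and `i = j = k = 2`);
i.e., any period-3 2-free Tetranacci sequence is constant. -/
theorem period_three_equations_force_equal (a b c : ℕ)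
    (ha : 0 < a) (hb : 0 < b) (hc : 0 < c)
    (hoa : Odd a) (hob : Odd b) (hoc : Odd c)
    (i j k : ℕ) (hi : 0 < i) (hj : 0 < j) (hk : 0 < k)
    (h1 : 2 * a + b + c = b * 2 ^ i)
    (h2 : a + 2 * b + c = c * 2 ^ j)
    (h3 : a + b + 2 * c = a * 2 ^ k) :
    a = b ∧ b = c ∧ i = 2 ∧ j = 2 ∧ k = 2 := by
  obtain hab | hab := le_total b a
  · obtain hac | hac := le_total c a
    · obtain ⟨x, y, p, q, r⟩ := aux_period3 a b c ha hb hc i j k hi hj hk hab hac h1 h2 h3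
      exact ⟨x.symm ▸ rfl, by omega, p, q, r⟩
    · obtain ⟨x, y, p, q, r⟩ := aux_period3 c a b hc ha hb k i j hk hi hj hac (by omega)
        (by omega) (by omega) (by omega)
      exact ⟨by omega, by omega, q, r, p⟩
  · obtain hbc | hbc := le_total c b
    · obtain ⟨x, y, p, q, r⟩ := aux_period3 b c a hb hc ha j k i hj hk hi hbc hab
        (by omega) (by omega) (by omega)
      exact ⟨by omega, by omega, r, p, q⟩
    · obtain ⟨x, y, p, q, r⟩ := aux_period3 c a b hc ha hb k i j hk hi hj (by omega) hbc
        (by omega) (by omega) (by omega)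
      exact ⟨by omega, by omega, q, r, p⟩
end
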